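/- Let F : ℝ^d → ℝ be differentiable and L-smooth with L > 0, and suppose F attains its global minimum at w*. Let Δ ≥ 0 and define the iterates w^{t+1} = w^t − (1/L)g^t where g^0, g^1, … are any vectors satisfying ‖g^t − ∇F(w^t)‖₂ ≤ Δ for every t. Then for every integer T ≥ 1, min_{0 ≤ t ≤ T−1} ‖∇F(w^t)‖₂² ≤ (2L/T)·(F(w⁰) − F(w*)) + Δ². -/

import Mathlib

open scoped RealInnerProductSpace

lemma descent_lemma {d : ℕ} (F : EuclideanSpace ℝ (Fin d) → ℝ)
    (F' : EuclideanSpace ℝ (Fin d) → EuclideanSpace ℝ (Fin d))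
    (L : ℝ) (hL : 0 < L)
    (hgrad : ∀ w, HasGradientAt F (F' w) w)
    (hsmooth : ∀ w w', ‖F' w - F' w'‖ ≤ L * ‖w - w'‖)
    (x v : EuclideanSpace ℝ (Fin d)) :
    F (x + v) ≤ F x + ⟪F' x, v⟫ + L / 2 * ‖v‖ ^ 2 := by
  have lipF : LipschitzWith (Real.toNNReal L) F' := by
    apply LipschitzWith.of_dist_le_mul
    intro a b
    rw [dist_eq_norm, dist_eq_norm]
    simpa [Real.coe_toNNReal L hL.le] using hsmooth a b
  have hder : ∀ t : ℝ, HasDerivAt (fun s : ℝ => F (x + s • v)) ⟪F' (x + t • v), v⟫ t := by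
    intro t
    have hline : HasDerivAt (fun s : ℝ => x + s • v) v t := by
      simpa using ((hasDerivAt_id t).smul_const v).const_add x
    have := (hgrad (x + t • v)).hasFDerivAt.comp_hasDerivAt t hline
    simp only [InnerProductSpace.toDual_apply_apply] at this
    exact this
  have hcont : Continuous fun t : ℝ => ⟪F' (x + t • v), v⟫ := by
    apply Continuous.inner
    · exact lipF.continuous.comp (by continuity)
    · exact continuous_const
  have hFTC : ∫ t in (0:ℝ)..1, ⟪F' (x + t • v), v⟫ = F (x + v) - F x := by
    have := intervalIntegral.integral_eq_sub_of_hasDerivAt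
      (f := fun s : ℝ => F (x + s • v)) (f' := fun t => ⟪F' (x + t • v), v⟫)
      (a := 0) (b := 1) (fun t _ => hder t) (hcont.intervalIntegrable 0 1)
    simpa using this
  have hbound : ∫ t in (0:ℝ)..1, ⟪F' (x + t • v), v⟫ ≤
      ∫ t in (0:ℝ)..1, (⟪F' x, v⟫ + L * t * ‖v‖ ^ 2) := by
    apply intervalIntegral.integral_mono_on (by norm_num)
      (hcont.intervalIntegrable 0 1)
      ((by continuity : Continuous fun t : ℝ => ⟪F' x, v⟫ + L * t * ‖v‖ ^ 2).intervalIntegrable 0 1)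
    intro t ht
    rcases ht with ⟨ht0, _⟩
    have h1 : ⟪F' (x + t • v), v⟫ - ⟪F' x, v⟫ = ⟪F' (x + t • v) - F' x, v⟫ := by
      rw [inner_sub_left]
    have h2 : ⟪F' (x + t • v) - F' x, v⟫ ≤ ‖F' (x + t • v) - F' x‖ * ‖v‖ :=
      real_inner_le_norm _ _
    have h3 : ‖F' (x + t • v) - F' x‖ ≤ L * (t * ‖v‖) := by
      have := hsmooth (x + t • v) x
      simpa [norm_smul, abs_of_nonneg ht0] using this
    nlinarith [norm_nonneg v, mul_le_mul_of_nonneg_right h3 (norm_nonneg v)]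
  have hint : ∫ t in (0:ℝ)..1, (⟪F' x, v⟫ + L * t * ‖v‖ ^ 2)
      = ⟪F' x, v⟫ + L / 2 * ‖v‖ ^ 2 := by
    have heq : (fun t : ℝ => ⟪F' x, v⟫ + L * t * ‖v‖ ^ 2)
        = fun t : ℝ => ⟪F' x, v⟫ + (L * ‖v‖ ^ 2) * t := by funext t; ring
    rw [heq, intervalIntegral.integral_add (g := fun t : ℝ => (L * ‖v‖ ^ 2) * t) intervalIntegrable_const
      ((continuous_const.mul continuous_id').intervalIntegrable 0 1),
      intervalIntegral.integral_const_mul]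
    simp [integral_id]
    ring
  rw [hFTC, hint] at hbound
  linarith

/-- Inexact gradient descent with step size `1/L` on an
`L`-smooth function attaining its global minimum at `wstar`, with gradient
estimates within `Δ` of the true gradients, satisfies for every `T ≥ 1`:
`min_{0 ≤ t ≤ T−1} ‖∇F(w^t)‖² ≤ (2L/T)·(F(w⁰) − F(w*)) + Δ²`. -/
theorem smooth_inexact_gd_min_gradient_norm {d : ℕ}
    (F : EuclideanSpace ℝ (Fin d) → ℝ)
    (F' : EuclideanSpace ℝ (Fin d) → EuclideanSpace ℝ (Fin d))
    (L : ℝ) (hL : 0 < L)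
    (hgrad : ∀ w, HasGradientAt F (F' w) w)
    (hsmooth : ∀ w w', ‖F' w - F' w'‖ ≤ L * ‖w - w'‖)
    (wstar : EuclideanSpace ℝ (Fin d)) (hmin : ∀ w, F wstar ≤ F w)
    (Δ : ℝ) (hΔ : 0 ≤ Δ)
    (w : ℕ → EuclideanSpace ℝ (Fin d)) (g : ℕ → EuclideanSpace ℝ (Fin d))
    (hg : ∀ t, ‖g t - F' (w t)‖ ≤ Δ)
    (hiter : ∀ t, w (t + 1) = w t - (1 / L) • g t) :
    ∀ T : ℕ, 1 ≤ T → ∃ t < T,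
      ‖F' (w t)‖ ^ 2 ≤ 2 * L / T * (F (w 0) - F wstar) + Δ ^ 2 := by
  have key : ∀ t : ℕ, ‖F' (w t)‖ ^ 2 ≤ 2 * L * (F (w t) - F (w (t + 1))) + Δ ^ 2 := by
    intro t
    set a := ⟪F' (w t), g t⟫ with ha
    set m := ‖g t‖ with hm
    set n := ‖F' (w t)‖ with hn
    have hstep := descent_lemma F F' L hL hgrad hsmooth (w t) ((-(1 / L)) • g t)
    have hw : w t + (-(1 / L)) • g t = w (t + 1) := by
      rw [hiter t, sub_eq_add_neg, neg_smul]
    rw [hw, real_inner_smul_right, norm_smul] at hstep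
    have habs : ‖(-(1 / L) : ℝ)‖ = 1 / L := by
      rw [Real.norm_eq_abs, abs_neg, abs_of_nonneg (by positivity)]
    rw [habs] at hstep
    rw [mul_pow] at hstep
    have hc : L / 2 * ((1 / L) ^ 2 * m ^ 2) = m ^ 2 / (2 * L) := by field_simp
    rw [hc] at hstep
    rw [← ha] at hstep
    have key1 : a / L - m ^ 2 / (2 * L) ≤ F (w t) - F (w (t + 1)) := by
      have hra : -(1 / L) * a = -(a / L) := by ring
      linarith
    have key2 := mul_le_mul_of_nonneg_left key1 (by positivity : (0:ℝ) ≤ 2 * L)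
    have hc2 : 2 * L * (a / L - m ^ 2 / (2 * L)) = 2 * a - m ^ 2 := by field_simp
    rw [hc2] at key2
    have hsq : ‖g t - F' (w t)‖ ^ 2 = m ^ 2 - 2 * a + n ^ 2 := by
      rw [hm, hn, ha, real_inner_comm]
      exact norm_sub_sq_real _ _
    have hΔ2 : ‖g t - F' (w t)‖ ^ 2 ≤ Δ ^ 2 :=
      pow_le_pow_left₀ (norm_nonneg _) (hg t) 2
    rw [hsq] at hΔ2
    linarith
  intro T hT
  by_contra hcon
  push_neg at hcon
  have hTpos : (0:ℝ) < T := by exact_mod_cast hT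
  have hne : (Finset.range T).Nonempty := ⟨0, Finset.mem_range.mpr hT⟩
  have hsum : ∑ t ∈ Finset.range T, (2 * L / T * (F (w 0) - F wstar) + Δ ^ 2)
      < ∑ t ∈ Finset.range T, ‖F' (w t)‖ ^ 2 :=
    Finset.sum_lt_sum_of_nonempty hne fun i hi => hcon i (Finset.mem_range.mp hi)
  have hsum2 : ∑ t ∈ Finset.range T, ‖F' (w t)‖ ^ 2
      ≤ ∑ t ∈ Finset.range T, (2 * L * (F (w t) - F (w (t + 1))) + Δ ^ 2) :=
    Finset.sum_le_sum fun i _ => key i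
  rw [Finset.sum_add_distrib, ← Finset.mul_sum,
    Finset.sum_range_sub' (fun t => F (w t)), Finset.sum_const,
    Finset.card_range, nsmul_eq_mul] at hsum2
  rw [Finset.sum_const, Finset.card_range, nsmul_eq_mul] at hsum
  have hfinal : F wstar ≤ F (w T) := hmin _
  have hTB : (T:ℝ) * (2 * L / T * (F (w 0) - F wstar) + Δ ^ 2)
      = 2 * L * (F (w 0) - F wstar) + T * Δ ^ 2 := by
    field_simp
  rw [hTB] at hsum
  nlinarith [hsum, hsum2, mul_le_mul_of_nonneg_left hfinal (by positivity : (0:ℝ) ≤ 2 * L)]
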